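/- For the wormhole metric of Section IV with E = 0, the first derivatives of ψ(x,y) = Δ(κ − g^{ij}p_ip_j) vanish at x = y = 0 and the second derivatives satisfy ∂²_x ψ|_{(0,0)} = ∂²_y ψ|_{(0,0)} = 2(L²κ − 𝓛²). -/

import Mathlib

/-!
With `E = 0` every term involving `a` drops out, and the restriction of `ψ` to either axis
has the form `c t² + d (1 + s t²)⁻¹ + e`: along `x` with `s = 1`, `d = 𝓛²`, along `y` with
`s = -1`, `d = -𝓛²`, and `c = L²κ` in both cases. Such a function is even with Taylor
expansion `d + e + (c - d s) t² + O(t⁴)` at `0`, and `d s = 𝓛²` for both sections.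
-/

/-- The function `ψ(x,y) = Δ (κ − g^{ij} pᵢ pⱼ)` for the wormhole metric of
Section IV, with `p₀ = −E`, `p₃ = 𝓛`, `Δ = L²(x² + y²)`, `Δ₁ = L²(x² + 1)`,
and inverse-metric components `X^{00} = −L²x² + a²/Δ₁`, `X^{03} = −aLx/Δ₁`,
`X^{33} = −L²/Δ₁`, `Y^{00} = −L²y²`, `Y^{33} = 1/(1 − y²)`. -/
noncomputable def WHpsi (a L E Lam κ x y : ℝ) : ℝ :=
  L ^ 2 * (x ^ 2 + y ^ 2) * κ -
    ((-(L ^ 2 * x ^ 2) + a ^ 2 / (L ^ 2 * (x ^ 2 + 1))) * E ^ 2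
      + 2 * (a * L * x / (L ^ 2 * (x ^ 2 + 1))) * E * Lam
      + (-(L ^ 2) / (L ^ 2 * (x ^ 2 + 1))) * Lam ^ 2
      + (-(L ^ 2 * y ^ 2)) * E ^ 2
      + Lam ^ 2 / (1 - y ^ 2))

section QuadraticPlusInverse

variable (c d s e : ℝ)

theorem hasDerivAt_quadratic_add_inv {t : ℝ} (ht : 1 + s * t ^ 2 ≠ 0) :
    HasDerivAt (fun t => c * t ^ 2 + d * (1 + s * t ^ 2)⁻¹ + e)
      (2 * c * t - 2 * d * s * t / (1 + s * t ^ 2) ^ 2) t := by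
  have hden : HasDerivAt (fun t => 1 + s * t ^ 2) (s * (2 * t)) t := by
    simpa using ((hasDerivAt_pow 2 t).const_mul s).const_add 1
  have hsq : HasDerivAt (fun t => c * t ^ 2) (c * (2 * t)) t := by
    simpa using (hasDerivAt_pow 2 t).const_mul c
  exact ((hsq.add ((hden.inv ht).const_mul d)).add_const e).congr_deriv (by ring)

theorem deriv_quadratic_add_inv_eventuallyEq :
    deriv (fun t => c * t ^ 2 + d * (1 + s * t ^ 2)⁻¹ + e) =ᶠ[nhds 0]
      fun t => 2 * c * t - 2 * d * s * t / (1 + s * t ^ 2) ^ 2 := by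
  have hopen : IsOpen {t : ℝ | 1 + s * t ^ 2 ≠ 0} :=
    isOpen_ne_fun (by fun_prop) continuous_const
  filter_upwards [hopen.mem_nhds (by simp)] with t ht
  exact (hasDerivAt_quadratic_add_inv c d s e ht).deriv

theorem deriv_quadratic_add_inv_zero :
    deriv (fun t => c * t ^ 2 + d * (1 + s * t ^ 2)⁻¹ + e) 0 = 0 := by
  simpa using (hasDerivAt_quadratic_add_inv c d s e (t := 0) (by simp)).deriv

theorem iteratedDeriv_two_quadratic_add_inv_zero :
    iteratedDeriv 2 (fun t => c * t ^ 2 + d * (1 + s * t ^ 2)⁻¹ + e) 0 =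
      2 * (c - d * s) := by
  have hlin : HasDerivAt (fun t : ℝ => 2 * c * t) (2 * c) 0 := by
    simpa using (hasDerivAt_id (0 : ℝ)).const_mul (2 * c)
  have hnum : HasDerivAt (fun t : ℝ => 2 * d * s * t) (2 * d * s) 0 := by
    simpa using (hasDerivAt_id (0 : ℝ)).const_mul (2 * d * s)
  have hden : HasDerivAt (fun t : ℝ => (1 + s * t ^ 2) ^ 2) 0 0 := by
    simpa using (((hasDerivAt_pow 2 (0 : ℝ)).const_mul s).const_add 1).fun_pow 2
  have h := hlin.fun_sub (hnum.fun_div hden (by simp))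
  rw [iteratedDeriv_succ, iteratedDeriv_one,
    (deriv_quadratic_add_inv_eventuallyEq c d s e).deriv_eq, h.deriv]
  ring

end QuadraticPlusInverse

theorem WHpsi_x_section (a L Lam κ : ℝ) (hL : L ≠ 0) :
    (fun x => WHpsi a L 0 Lam κ x 0) =
      fun x => L ^ 2 * κ * x ^ 2 + Lam ^ 2 * (1 + 1 * x ^ 2)⁻¹ + -Lam ^ 2 := by
  funext x
  have hx : x ^ 2 + 1 ≠ 0 := by positivity
  simp only [WHpsi]
  field_simp
  ring

theorem WHpsi_y_section (a L Lam κ : ℝ) (hL : L ≠ 0) :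
    (fun y => WHpsi a L 0 Lam κ 0 y) =
      fun y => L ^ 2 * κ * y ^ 2 + -Lam ^ 2 * (1 + -1 * y ^ 2)⁻¹ + Lam ^ 2 := by
  funext y
  simp only [WHpsi]
  field_simp
  ring

theorem WHpsi_second_derivs_general (a L Lam κ : ℝ) (hL : 0 < L) :
    deriv (fun x => WHpsi a L 0 Lam κ x 0) 0 = 0 ∧
    deriv (fun y => WHpsi a L 0 Lam κ 0 y) 0 = 0 ∧
    iteratedDeriv 2 (fun x => WHpsi a L 0 Lam κ x 0) 0 =
      2 * (L ^ 2 * κ - Lam ^ 2) ∧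
    iteratedDeriv 2 (fun y => WHpsi a L 0 Lam κ 0 y) 0 =
      2 * (L ^ 2 * κ - Lam ^ 2) := by
  rw [WHpsi_x_section a L Lam κ hL.ne', WHpsi_y_section a L Lam κ hL.ne',
    iteratedDeriv_two_quadratic_add_inv_zero, iteratedDeriv_two_quadratic_add_inv_zero]
  refine ⟨deriv_quadratic_add_inv_zero .., deriv_quadratic_add_inv_zero .., by ring, by ring⟩

/-- Equation (35): for the wormhole metric with `E = 0`, the first derivatives
of `ψ` vanish at `x = y = 0` and the second derivatives both equal
`2(L²κ − 𝓛²)`. -/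
theorem WHpsi_second_derivs (a L Lam κ : ℝ) (hL : 0 < L)
    (hκ : κ = 0 ∨ κ = -1) :
    deriv (fun x => WHpsi a L 0 Lam κ x 0) 0 = 0 ∧
    deriv (fun y => WHpsi a L 0 Lam κ 0 y) 0 = 0 ∧
    iteratedDeriv 2 (fun x => WHpsi a L 0 Lam κ x 0) 0 =
      2 * (L ^ 2 * κ - Lam ^ 2) ∧
    iteratedDeriv 2 (fun y => WHpsi a L 0 Lam κ 0 y) 0 =
      2 * (L ^ 2 * κ - Lam ^ 2) :=
  WHpsi_second_derivs_general a L Lam κ hL
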